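/- For any a ∈ ℕ and b ≥ 2, the cyclic Ramsey number of a star of order a versus the monotone cycle of order b equals 1 + (a−1)(b−1). -/

import Mathlib

open SimpleGraph Finset

/-- A symmetric `k`-edge-coloring `χ` of the complete graph on `Fin n` contains a copy of `H`
in color `j` via a strictly increasing embedding. -/
def ContainsOrd {m n k : ℕ} (H : SimpleGraph (Fin m))
    (χ : Fin n → Fin n → Fin k) (j : Fin k) : Prop :=
  ∃ φ : Fin m → Fin n, StrictMono φ ∧ ∀ u v : Fin m, H.Adj u v → χ (φ u) (φ v) = j

/-- Contains a copy via an embedding that is increasing up to a cyclic permutation. -/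
def ContainsCyc {m n k : ℕ} (H : SimpleGraph (Fin m))
    (χ : Fin n → Fin n → Fin k) (j : Fin k) : Prop :=
  ∃ φ : Fin m → Fin n, (∃ t : Fin m, StrictMono fun i : Fin m => φ (i + t)) ∧
    ∀ u v : Fin m, H.Adj u v → χ (φ u) (φ v) = j

/-- Contains a copy via an arbitrary injective embedding. -/
def ContainsStd {m n k : ℕ} (H : SimpleGraph (Fin m))
    (χ : Fin n → Fin n → Fin k) (j : Fin k) : Prop :=
  ∃ φ : Fin m → Fin n, Function.Injective φ ∧ ∀ u v : Fin m, H.Adj u v → χ (φ u) (φ v) = j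

/-- The ordered Ramsey number of a family of graphs. -/
noncomputable def Rord {k : ℕ} (m : Fin k → ℕ) (H : ∀ j, SimpleGraph (Fin (m j))) : ℕ :=
  sInf {n | ∀ χ : Fin n → Fin n → Fin k, (∀ u v, χ u v = χ v u) → ∃ j, ContainsOrd (H j) χ j}

/-- The cyclic Ramsey number of a family of graphs. -/
noncomputable def Rcyc {k : ℕ} (m : Fin k → ℕ) (H : ∀ j, SimpleGraph (Fin (m j))) : ℕ :=
  sInf {n | ∀ χ : Fin n → Fin n → Fin k, (∀ u v, χ u v = χ v u) → ∃ j, ContainsCyc (H j) χ j}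

/-- The standard Ramsey number of a family of graphs. -/
noncomputable def Rstd {k : ℕ} (m : Fin k → ℕ) (H : ∀ j, SimpleGraph (Fin (m j))) : ℕ :=
  sInf {n | ∀ χ : Fin n → Fin n → Fin k, (∀ u v, χ u v = χ v u) → ∃ j, ContainsStd (H j) χ j}

/-- The two-color ordered Ramsey number. -/
noncomputable def Rord2 {a b : ℕ} (H₁ : SimpleGraph (Fin a)) (H₂ : SimpleGraph (Fin b)) : ℕ :=
  sInf {n | ∀ χ : Fin n → Fin n → Fin 2, (∀ u v, χ u v = χ v u) →
    ContainsOrd H₁ χ 0 ∨ ContainsOrd H₂ χ 1}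

/-- The two-color cyclic Ramsey number. -/
noncomputable def Rcyc2 {a b : ℕ} (H₁ : SimpleGraph (Fin a)) (H₂ : SimpleGraph (Fin b)) : ℕ :=
  sInf {n | ∀ χ : Fin n → Fin n → Fin 2, (∀ u v, χ u v = χ v u) →
    ContainsCyc H₁ χ 0 ∨ ContainsCyc H₂ χ 1}

/-- The monotone path of order `n`. -/
def monPath (n : ℕ) : SimpleGraph (Fin n) :=
  SimpleGraph.fromRel fun u v => (u : ℕ) + 1 = (v : ℕ)

/-- The monotone cycle of order `n`. -/
def monCycle (n : ℕ) : SimpleGraph (Fin n) :=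
  SimpleGraph.fromRel fun u v => (u : ℕ) + 1 = (v : ℕ) ∨ ((u : ℕ) = 0 ∧ (v : ℕ) = n - 1)

/-- The start-central star of order `n` (center `0`). -/
def starSC (n : ℕ) : SimpleGraph (Fin n) :=
  SimpleGraph.fromRel fun u _ => (u : ℕ) = 0

/-- The star of order `n` with center `c`. -/
def starG (n : ℕ) (c : Fin n) : SimpleGraph (Fin n) :=
  SimpleGraph.fromRel fun u _ => u = c

/-- The nested matching of order `n`. -/
def nestedMatching (n : ℕ) : SimpleGraph (Fin n) :=
  SimpleGraph.fromRel fun u v => (u : ℕ) + (v : ℕ) = n - 1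

/-- Rotational isomorphism of two graphs on `Fin m`. -/
def RotIso {m : ℕ} (G₁ G₂ : SimpleGraph (Fin m)) : Prop :=
  ∃ s : Fin m, ∀ u v : Fin m, G₁.Adj u v ↔ G₂.Adj (u + s) (v + s)

/-!
Lower bound: split `(a-1)(b-1)` vertices into `b-1` consecutive blocks of `a-1` vertices and
colour an edge `0` inside a block and `1` between blocks. A colour-0 star lies in one block, which
is too small, and along a colour-1 monotone cycle, read from its smallest vertex, the block index
strictly increases, so it would need `b` blocks.

Upper bound: if some vertex has `a-1` neighbours of colour 0, they span the star. Otherwise the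
first vertex has more than `(a-1)(b-2)` later neighbours of colour 1. Label each of them by the
length of the longest increasing colour-1 path among them ending there: equal labels span a
colour-0 clique, so by pigeonhole some path has `b-1` vertices (a clique of size `a` would give a
vertex of colour-0 degree `a-1`), and the first vertex closes it into a monotone cycle.
-/

section MonotonePath

variable {α β : Type*} [Preorder α] [Preorder β] (R : α → α → Prop)

def IsMonotonePath {m : ℕ} (g : Fin (m + 1) → α) : Prop :=
  ∀ i : Fin m, g i.castSucc < g i.succ ∧ R (g i.castSucc) (g i.succ)

variable {R}

theorem IsMonotonePath.strictMono {m : ℕ} {g : Fin (m + 1) → α} (hg : IsMonotonePath R g) :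
    StrictMono g :=
  Fin.strictMono_iff_lt_succ.2 fun i => (hg i).1

theorem IsMonotonePath.snoc {m : ℕ} {g : Fin (m + 1) → α} (hg : IsMonotonePath R g) {v : α}
    (hlt : g (Fin.last m) < v) (hR : R (g (Fin.last m)) v) :
    IsMonotonePath R (Fin.snoc (α := fun _ => α) g v) := by
  intro i
  induction i using Fin.lastCases with
  | last => simp only [Fin.snoc_castSucc, Fin.succ_last, Fin.snoc_last]; exact ⟨hlt, hR⟩
  | cast i => simpa only [Fin.snoc_castSucc, Fin.succ_castSucc] using hg i

theorem IsMonotonePath.cons {m : ℕ} {g : Fin (m + 1) → α} (hg : IsMonotonePath R g) {v : α}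
    (hlt : v < g 0) (hR : R v (g 0)) :
    IsMonotonePath R (Fin.cons (α := fun _ => α) v g) := by
  intro i
  induction i using Fin.cases with
  | zero => simpa using ⟨hlt, hR⟩
  | succ i => simpa using hg i

theorem IsMonotonePath.comp_castLE {m l : ℕ} {g : Fin (m + 1) → α} (hg : IsMonotonePath R g)
    (h : l + 1 ≤ m + 1) : IsMonotonePath R (g ∘ Fin.castLE h) :=
  fun i => hg (Fin.castLE (by omega) i)

theorem IsMonotonePath.comp_orderEmbedding {R' : β → β → Prop} {m : ℕ} {g : Fin (m + 1) → α}
    (hg : IsMonotonePath R g) (e : α ↪o β) (he : ∀ u v, R u v → R' (e u) (e v)) :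
    IsMonotonePath R' (e ∘ g) :=
  fun i => ⟨e.strictMono (hg i).1, he _ _ (hg i).2⟩

end MonotonePath

section MonotonePathHeight

variable {α : Type*} [Preorder α] [Fintype α] (R : α → α → Prop)

def HasMonotonePathTo (v : α) (l : ℕ) : Prop :=
  ∃ g : Fin (l + 1) → α, IsMonotonePath R g ∧ g (Fin.last l) = v

open Classical in
noncomputable def monotonePathHeight (v : α) : ℕ :=
  Nat.findGreatest (HasMonotonePathTo R v) (Fintype.card α)

variable {R}

theorem IsMonotonePath.succ_le_card {m : ℕ} {g : Fin (m + 1) → α} (hg : IsMonotonePath R g) :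
    m + 1 ≤ Fintype.card α := by
  simpa using Fintype.card_le_of_injective g hg.strictMono.injective

theorem hasMonotonePathTo_monotonePathHeight (v : α) :
    HasMonotonePathTo R v (monotonePathHeight R v) := by
  classical
  exact Nat.findGreatest_spec (P := HasMonotonePathTo R v)
    (Nat.zero_le _) ⟨fun _ => v, finZeroElim, rfl⟩

theorem monotonePathHeight_lt_monotonePathHeight {u v : α} (huv : u < v) (hR : R u v) :
    monotonePathHeight R u < monotonePathHeight R v := by
  classical
  obtain ⟨g, hg, hgu⟩ := hasMonotonePathTo_monotonePathHeight (R := R) u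
  rw [← hgu] at huv hR
  have hpath := hg.snoc huv hR
  exact Nat.le_findGreatest (P := HasMonotonePathTo R v)
    ((Nat.le_succ _).trans hpath.succ_le_card) ⟨_, hpath, Fin.snoc_last _ _⟩

theorem exists_antichain_or_isMonotonePath {k m : ℕ} (hcard : k * m < Fintype.card α) :
    (∃ T : Finset α, #T = k + 1 ∧ ∀ u ∈ T, ∀ w ∈ T, u < w → ¬ R u w) ∨
      ∃ g : Fin (m + 1) → α, IsMonotonePath R g := by
  classical
  by_cases hlong : ∃ v, m ≤ monotonePathHeight R v
  · obtain ⟨v, hv⟩ := hlong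
    obtain ⟨g, hg, -⟩ := hasMonotonePathTo_monotonePathHeight (R := R) v
    exact Or.inr ⟨_, hg.comp_castLE (by omega)⟩
  push Not at hlong
  obtain ⟨h, -, hfiber⟩ := Finset.exists_lt_card_fiber_of_mul_lt_card_of_maps_to
    (s := univ) (t := range m) (f := monotonePathHeight R) (n := k)
    (fun v _ => mem_range.2 (hlong v)) (by simpa [mul_comm] using hcard)
  obtain ⟨T, hTsub, hT⟩ := exists_subset_card_eq hfiber
  refine Or.inl ⟨T, hT, fun u hu w hw huw hR => ?_⟩
  have hu' := (mem_filter.1 (hTsub hu)).2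
  have hw' := (mem_filter.1 (hTsub hw)).2
  exact (monotonePathHeight_lt_monotonePathHeight huw hR).ne (hu'.trans hw'.symm)

end MonotonePathHeight

section Colorings

variable {m n r : ℕ} {H : SimpleGraph (Fin m)} {χ : Fin n → Fin n → Fin r} {j : Fin r}

theorem ContainsOrd.containsCyc [NeZero m] (h : ContainsOrd H χ j) : ContainsCyc H χ j := by
  obtain ⟨φ, hφ, hadj⟩ := h
  exact ⟨φ, ⟨0, by simpa using hφ⟩, hadj⟩

theorem ContainsCyc.containsStd (h : ContainsCyc H χ j) : ContainsStd H χ j := by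
  obtain ⟨φ, ⟨t, hφ⟩, hadj⟩ := h
  refine ⟨φ, fun x y hxy => ?_, hadj⟩
  have := NeZero.of_pos t.pos
  have : x - t = y - t := hφ.injective (by simpa only [sub_add_cancel] using hxy)
  simpa using this

theorem ContainsCyc.of_castLE {n' : ℕ} (h : n ≤ n') {χ : Fin n' → Fin n' → Fin r}
    (hc : ContainsCyc H (fun u v => χ (Fin.castLE h u) (Fin.castLE h v)) j) :
    ContainsCyc H χ j := by
  obtain ⟨φ, ⟨t, hφ⟩, hadj⟩ := hc
  exact ⟨Fin.castLE h ∘ φ, ⟨t, (Fin.strictMono_castLE h).comp hφ⟩, hadj⟩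

theorem monCycle_adj_add_one (i : Fin (m + 2)) : (monCycle (m + 2)).Adj i (i + 1) := by
  have hi := i.isLt
  rw [monCycle, fromRel_adj, Fin.val_add_one]
  split_ifs with h
  · subst h
    simp
  · refine ⟨fun hne => ?_, Or.inl (Or.inl rfl)⟩
    have := congrArg Fin.val hne
    rw [Fin.val_add_one, if_neg h] at this
    omega

theorem ContainsCyc.exists_isMonotonePath (h : ContainsCyc (monCycle (m + 2)) χ j) :
    ∃ ψ : Fin (m + 2) → Fin n, IsMonotonePath (fun u v => χ u v = j) ψ := by
  obtain ⟨φ, ⟨t, hφ⟩, hadj⟩ := h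
  refine ⟨fun i => φ (i + t), fun i => ⟨hφ Fin.castSucc_lt_succ, ?_⟩⟩
  show χ (φ (i.castSucc + t)) (φ (i.succ + t)) = j
  have hsucc : (i.succ + t : Fin (m + 2)) = i.castSucc + t + 1 := by
    rw [← Fin.coeSucc_eq_succ]
    abel
  rw [hsucc]
  exact hadj _ _ (monCycle_adj_add_one _)

theorem containsOrd_monCycle_of_isMonotonePath (hsym : ∀ u v, χ u v = χ v u)
    {ψ : Fin (m + 2) → Fin n} (hψ : IsMonotonePath (fun u v => χ u v = j) ψ)
    (hclose : χ (ψ 0) (ψ (Fin.last _)) = j) : ContainsOrd (monCycle (m + 2)) χ j := by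
  have hedge : ∀ u v : Fin (m + 2), (u : ℕ) + 1 = v ∨ ((u : ℕ) = 0 ∧ (v : ℕ) = m + 2 - 1) →
      χ (ψ u) (ψ v) = j := by
    rintro u v (h | ⟨hu, hv⟩)
    · obtain ⟨i, rfl, rfl⟩ : ∃ i : Fin (m + 1), i.castSucc = u ∧ i.succ = v :=
        ⟨⟨u, by omega⟩, rfl, Fin.ext (by simp [h])⟩
      exact (hψ i).2
    · rw [show u = 0 from Fin.ext hu, show v = Fin.last _ from Fin.ext hv]
      exact hclose
  refine ⟨ψ, hψ.strictMono, fun u v huv => ?_⟩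
  rcases (fromRel_adj _ _ _).1 huv |>.2 with h | h
  · exact hedge u v h
  · rw [hsym]
    exact hedge v u h

end Colorings

section Star

variable {n r : ℕ}

def colorNeighborFinset (χ : Fin n → Fin n → Fin r) (j : Fin r) (v : Fin n) : Finset (Fin n) :=
  {w | w ≠ v ∧ χ v w = j}

theorem containsCyc_starG_of_le_card {a : ℕ} (c : Fin a) {χ : Fin n → Fin n → Fin r}
    (hsym : ∀ u v, χ u v = χ v u) {j : Fin r} {v : Fin n}
    (hv : a - 1 ≤ #(colorNeighborFinset χ j v)) : ContainsCyc (starG a c) χ j := by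
  have := NeZero.of_pos c.pos
  obtain ⟨W, hWsub, hW⟩ := exists_subset_card_eq hv
  have hvW : v ∉ W := fun h => (mem_filter.1 (hWsub h)).2.1 rfl
  set T := cons v W hvW
  have hT : #T = a := by rw [card_cons, hW]; have := c.pos; omega
  set e := T.orderIsoOfFin hT
  set p := e.symm ⟨v, mem_cons_self v W⟩
  set φ : Fin a → Fin n := fun i => e (i - c + p)
  have hrot : ∀ i, i + (c - p) - c + p = i := fun i => by abel
  have hφc : φ c = v := by simp [φ, p]
  have hφinj : Function.Injective φ := fun x y hxy => by
    simpa using e.injective (Subtype.ext hxy)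
  have hnbr : ∀ i ≠ c, χ v (φ i) = j := fun i hi => by
    have hmem : φ i ∈ T := (e _).2
    rw [mem_cons] at hmem
    rcases hmem with hφi | hφi
    · exact absurd (hφinj (hφi.trans hφc.symm)) hi
    · exact (mem_filter.1 (hWsub hφi)).2.2
  refine ⟨φ, ⟨c - p, fun x y hxy => ?_⟩, fun u w huw => ?_⟩
  · simpa [φ, hrot] using e.strictMono hxy
  · obtain ⟨hne, rfl | rfl⟩ := (fromRel_adj _ _ _).1 huw
    · rw [hφc]
      exact hnbr w hne.symm
    · rw [hφc, hsym]
      exact hnbr u hne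

theorem exists_le_card_colorNeighborFinset {k : ℕ} {χ : Fin n → Fin n → Fin r} {j : Fin r}
    {T : Finset (Fin n)} (hT : #T = k + 1) (hclique : ∀ u ∈ T, ∀ w ∈ T, u ≠ w → χ u w = j) :
    ∃ v, k ≤ #(colorNeighborFinset χ j v) := by
  obtain ⟨v, hv⟩ : T.Nonempty := card_pos.1 (by omega)
  refine ⟨v, ?_⟩
  calc k = #(T.erase v) := by rw [card_erase_of_mem hv, hT, Nat.add_sub_cancel]
    _ ≤ #(colorNeighborFinset χ j v) := card_le_card fun w hw => by
      obtain ⟨hwv, hwT⟩ := mem_erase.1 hw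
      simpa [colorNeighborFinset, hwv] using hclique v hv w hwT (Ne.symm hwv)

theorem card_colorNeighborFinset_zero_add_card_colorNeighborFinset_one
    (χ : Fin n → Fin n → Fin 2) (v : Fin n) :
    #(colorNeighborFinset χ 0 v) + #(colorNeighborFinset χ 1 v) = n - 1 := by
  rw [← card_union_of_disjoint]
  · have hunion : colorNeighborFinset χ 0 v ∪ colorNeighborFinset χ 1 v = univ.erase v := by
      ext w
      simp only [colorNeighborFinset, mem_union, mem_filter, mem_univ, true_and, mem_erase,
        and_true]
      omega
    rw [hunion, card_erase_of_mem (mem_univ _), card_univ, Fintype.card_fin]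
  · exact disjoint_filter.2 fun w _ h0 h1 => by simp [h0.2] at h1

end Star

theorem containsCyc_starG_or_containsCyc_monCycle {k m n : ℕ} (hn : k * (m + 1) < n)
    (c : Fin (k + 1)) (χ : Fin n → Fin n → Fin 2) (hsym : ∀ u v, χ u v = χ v u) :
    ContainsCyc (starG (k + 1) c) χ 0 ∨ ContainsCyc (monCycle (m + 2)) χ 1 := by
  by_cases hdeg : ∃ v, k ≤ #(colorNeighborFinset χ 0 v)
  · obtain ⟨v, hv⟩ := hdeg
    exact Or.inl (containsCyc_starG_of_le_card c hsym (by simpa using hv))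
  right
  set z : Fin n := ⟨0, by omega⟩
  have hS : k * m < #(colorNeighborFinset χ 1 z) := by
    have hz : #(colorNeighborFinset χ 0 z) < k := not_le.1 fun h => hdeg ⟨z, h⟩
    have := card_colorNeighborFinset_zero_add_card_colorNeighborFinset_one χ z
    rw [Nat.mul_succ] at hn
    omega
  have hSz : ∀ w ∈ colorNeighborFinset χ 1 z, z < w ∧ χ z w = 1 := fun w hw => by
    obtain ⟨hwz, hw1⟩ := (mem_filter.1 hw).2
    exact ⟨Fin.lt_def.2 (Nat.pos_of_ne_zero fun h => hwz (Fin.ext h)), hw1⟩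
  rcases exists_antichain_or_isMonotonePath (α := colorNeighborFinset χ 1 z)
      (R := fun u w => χ u w = 1) (k := k) (m := m) (by simpa using hS) with
    ⟨T, hT, hanti⟩ | ⟨g, hg⟩
  · refine absurd (exists_le_card_colorNeighborFinset (T := T.map (Function.Embedding.subtype _))
      (by rw [card_map, hT]) ?_) hdeg
    simp only [mem_map, Function.Embedding.subtype_apply]
    rintro _ ⟨u, hu, rfl⟩ _ ⟨w, hw, rfl⟩ hne
    rcases lt_or_gt_of_ne (Subtype.coe_ne_coe.1 hne) with h | h
    · have := hanti u hu w hw h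
      omega
    · have := hanti w hw u hu h
      rw [hsym]
      omega
  · have hpath := hg.comp_orderEmbedding (OrderEmbedding.subtype _) (R' := fun u w => χ u w = 1)
      fun _ _ h => h
    have hstart := hSz _ (g 0).2
    refine ContainsOrd.containsCyc <|
      containsOrd_monCycle_of_isMonotonePath hsym (hpath.cons hstart.1 hstart.2) ?_
    rw [← Fin.succ_last, Fin.cons_succ, Fin.cons_zero]
    exact (hSz _ (g (Fin.last m)).2).2

section BlockColoring

def blockColoring (l k : ℕ) (u v : Fin (l * k)) : Fin 2 :=
  if u.divNat = v.divNat then 0 else 1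

theorem blockColoring_comm {l k : ℕ} (u v : Fin (l * k)) :
    blockColoring l k u v = blockColoring l k v u := by
  simp only [blockColoring, eq_comm]

theorem not_containsStd_starG_blockColoring {l k : ℕ} (c : Fin (k + 1)) :
    ¬ ContainsStd (starG (k + 1) c) (blockColoring l k) 0 := by
  rintro ⟨φ, hφ, hadj⟩
  have hblock : ∀ i, (φ i).divNat = (φ c).divNat := fun i => by
    by_cases hi : i = c
    · rw [hi]
    · simpa [blockColoring, eq_comm] using
        hadj c i ((fromRel_adj _ _ _).2 ⟨Ne.symm hi, Or.inl rfl⟩)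
  have hinj : Function.Injective fun i => (φ i).modNat := fun x y hxy => hφ <| by
    rw [← Fin.divNat_mkDivMod_modNat (φ x), ← Fin.divNat_mkDivMod_modNat (φ y), hblock x,
      hblock y]
    exact congrArg _ hxy
  simpa using Fintype.card_le_of_injective _ hinj

theorem not_containsCyc_monCycle_blockColoring {m k : ℕ} :
    ¬ ContainsCyc (monCycle (m + 2)) (blockColoring (m + 1) k) 1 := by
  intro h
  obtain ⟨ψ, hψ⟩ := h.exists_isMonotonePath
  have hmono : StrictMono fun i => (ψ i).divNat := Fin.strictMono_iff_lt_succ.2 fun i => by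
    have hle : (ψ i.castSucc).divNat ≤ (ψ i.succ).divNat :=
      Fin.le_def.2 (Nat.div_le_div_right (hψ i).1.le)
    refine hle.lt_of_ne fun heq => ?_
    have := (hψ i).2
    simp [blockColoring, heq] at this
  simpa using Fintype.card_le_of_injective _ hmono.injective

end BlockColoring

theorem stmt11_general (a b : ℕ) (hb : 2 ≤ b) (c : Fin a) :
    Rcyc2 (starG a c) (monCycle b) = 1 + (a - 1) * (b - 1) := by
  obtain ⟨k, rfl⟩ : ∃ k, a = k + 1 := ⟨a - 1, by have := c.pos; omega⟩
  obtain ⟨m, rfl⟩ : ∃ m, b = m + 2 := ⟨b - 2, by omega⟩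
  rw [show 1 + (k + 1 - 1) * (m + 2 - 1) = k * (m + 1) + 1 by simp [add_comm]]
  have hgood : ∀ n, k * (m + 1) < n → ∀ χ : Fin n → Fin n → Fin 2, (∀ u v, χ u v = χ v u) →
      ContainsCyc (starG (k + 1) c) χ 0 ∨ ContainsCyc (monCycle (m + 2)) χ 1 :=
    fun n hn => containsCyc_starG_or_containsCyc_monCycle hn c
  refine le_antisymm (Nat.sInf_le (hgood _ (Nat.lt_succ_self _))) <|
    le_csInf ⟨_, hgood _ (Nat.lt_succ_self _)⟩ fun n hn => ?_
  by_contra! hlt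
  have hle : n ≤ (m + 1) * k := by rw [mul_comm]; omega
  rcases hn _ fun u v => blockColoring_comm (Fin.castLE hle u) (Fin.castLE hle v) with h | h
  · exact not_containsStd_starG_blockColoring c (h.of_castLE hle).containsStd
  · exact not_containsCyc_monCycle_blockColoring (h.of_castLE hle)

theorem stmt11 (a b : ℕ) (ha : 1 ≤ a) (hb : 2 ≤ b) (c : Fin a) :
    Rcyc2 (starG a c) (monCycle b) = 1 + (a - 1) * (b - 1) :=
  stmt11_general a b hb c
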